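/- arXiv:1609.07994 — 3 statements merged into one kernel-verified Lean document; each statement's English description precedes it below -/
import Mathlib

section
/- Let n and k be integers with 2 ≤ k ≤ n, let μ be the product of n independent copies of the uniform probability measure on the interval [0,1], and let τ : [0,1]^n → ℝ send each point x to its k-th smallest coordinate. Then the bottom-k cardinality estimator (k−1)/τ is an unbiased estimator of n, i.e. ∫ (k−1)/τ(x) dμ(x) = n. -/
open MeasureTheory

/-- The `k`-th smallest coordinate (the `k`-th order statistic) of a point of `[0,1]^n`
(more generally of `ℝ^n`). -/
noncomputable def kthSmallest (n k : ℕ) (x : Fin n → ℝ) : ℝ :=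
  (List.insertionSort (· ≤ ·) (List.ofFn x)).getD (k - 1) 0

/-- The product of `n` independent copies of the uniform probability measure on `[0,1]`. -/
noncomputable def unifCube (n : ℕ) : Measure (Fin n → ℝ) :=
  Measure.pi fun _ => volume.restrict (Set.Icc 0 1)

open Finset Polynomial
open scoped ENNReal

/-!
The event `τ ≤ u` says that at least `k` of the `n` independent uniform coordinates are `≤ u`, so
its probability is the binomial tail `∑_{j ≥ k} C(n,j) u^j (1-u)^(n-j)`, a sum of Bernstein
polynomials `b_{n,j}`. Differentiating, this sum telescopes to `n b_{n-1,k-1}`, which is therefore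
the density of `τ` on `[0,1]`. Finally `(k-1)/u · n b_{n-1,k-1}(u) = n (n-1) b_{n-2,k-2}(u)`, and
every Bernstein polynomial of degree `m` has integral `1/(m+1)` over `[0,1]`.
-/

theorem List.getElem_le_iff_lt_countP {α : Type*} [LinearOrder α] {l : List α}
    (hl : l.Pairwise (· ≤ ·)) {i : ℕ} (hi : i < l.length) (u : α) :
    l[i] ≤ u ↔ i < l.countP (· ≤ u) := by
  induction l generalizing i with
  | nil => simp at hi
  | cons a t ih =>
    rw [List.pairwise_cons] at hl
    by_cases hau : a ≤ u
    · cases i with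
      | zero => simp [hau]
      | succ i => simp [hau, ih hl.2 (Nat.lt_of_succ_lt_succ hi)]
    · have hgt : ∀ b ∈ a :: t, ¬ b ≤ u := by
        simp only [List.mem_cons, forall_eq_or_imp]
        exact ⟨hau, fun b hb hbu => hau ((hl.1 b hb).trans hbu)⟩
      have hzero : (a :: t).countP (· ≤ u) = 0 :=
        List.countP_eq_zero.2 fun b hb => by simpa using hgt b hb
      simpa [hzero] using hgt _ (List.getElem_mem hi)

theorem List.countP_ofFn_eq_card_filter {α : Type*} {n : ℕ} (x : Fin n → α) (p : α → Bool) :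
    (List.ofFn x).countP p = #{i | p (x i)} := by
  rw [List.ofFn_eq_map, List.countP_map, List.countP_eq_length_filter, Finset.card_def,
    Finset.filter_val, Fin.univ_def]
  simp only [Multiset.filter_coe, Bool.decide_eq_true, Multiset.coe_card]
  rfl

theorem kthSmallest_le_iff {n k : ℕ} (hk : 1 ≤ k) (hkn : k ≤ n) (x : Fin n → ℝ) (u : ℝ) :
    kthSmallest n k x ≤ u ↔ k ≤ #{i | x i ≤ u} := by
  have hlen : k - 1 < (List.insertionSort (· ≤ ·) (List.ofFn x)).length := by
    simp only [List.length_insertionSort, List.length_ofFn]; omega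
  rw [kthSmallest, List.getD_eq_getElem _ _ hlen,
    List.getElem_le_iff_lt_countP (List.pairwise_insertionSort _ _) hlen,
    (List.perm_insertionSort _ _).countP_eq, List.countP_ofFn_eq_card_filter]
  simp only [decide_eq_true_eq]
  omega

section
variable {ι α : Type*} [Fintype ι] {p : α → Prop} [DecidablePred p]

theorem setOf_le_card_filter_eq_preimage (k : ℕ) :
    {x : ι → α | k ≤ #{i | p (x i)}} =
      (fun x : ι → α => ({i | p (x i)} : Finset ι)) ⁻¹' ↑({t | k ≤ #t} : Finset (Finset ι)) := by
  ext x; simp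

variable [DecidableEq ι]

theorem filter_preimage_singleton_eq_pi (t : Finset ι) :
    (fun x : ι → α => ({i | p (x i)} : Finset ι)) ⁻¹' {t} =
      Set.univ.pi fun i => if i ∈ t then {a | p a} else {a | ¬ p a} := by
  ext x
  simp only [Set.mem_preimage, Set.mem_singleton_iff, Finset.ext_iff, Finset.mem_filter,
    Finset.mem_univ, true_and, Set.mem_pi, Set.mem_univ, forall_const]
  refine forall_congr' fun i => ?_
  split_ifs with hi <;> simp [hi]

variable [MeasurableSpace α]

theorem measurableSet_filter_preimage_singleton (hp : MeasurableSet {a | p a}) (t : Finset ι) :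
    MeasurableSet ((fun x : ι → α => ({i | p (x i)} : Finset ι)) ⁻¹' {t}) := by
  rw [filter_preimage_singleton_eq_pi]
  exact .univ_pi fun i => by split_ifs; exacts [hp, hp.compl]

theorem measurableSet_le_card_filter (hp : MeasurableSet {a | p a}) (k : ℕ) :
    MeasurableSet {x : ι → α | k ≤ #{i | p (x i)}} := by
  rw [setOf_le_card_filter_eq_preimage, ← Set.biUnion_preimage_singleton]
  exact Finset.measurableSet_biUnion _ fun t _ => measurableSet_filter_preimage_singleton hp t

theorem measure_pi_filter_preimage_singleton (ν : Measure α) [SigmaFinite ν] (t : Finset ι) :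
    Measure.pi (fun _ : ι => ν) ((fun x : ι → α => ({i | p (x i)} : Finset ι)) ⁻¹' {t}) =
      ν {a | p a} ^ #t * ν {a | ¬ p a} ^ (Fintype.card ι - #t) := by
  rw [filter_preimage_singleton_eq_pi, Measure.pi_pi, prod_apply_ite, prod_const, prod_const,
    filter_mem_eq_inter, Finset.univ_inter, filter_not, filter_mem_eq_inter, Finset.univ_inter,
    card_univ_sdiff]

theorem measure_pi_le_card_filter (ν : Measure α) [SigmaFinite ν] (hp : MeasurableSet {a | p a})
    (k : ℕ) :
    Measure.pi (fun _ : ι => ν) {x | k ≤ #{i | p (x i)}} =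
      ∑ j ∈ Ico k (Fintype.card ι + 1),
        (Fintype.card ι).choose j * ν {a | p a} ^ j * ν {a | ¬ p a} ^ (Fintype.card ι - j) := by
  rw [setOf_le_card_filter_eq_preimage, ← sum_measure_preimage_singleton _
    fun t _ => measurableSet_filter_preimage_singleton hp t]
  simp_rw [measure_pi_filter_preimage_singleton]
  rw [sum_filter, ← Finset.powerset_univ, sum_powerset_apply_card
    fun j => if k ≤ j then ν {a | p a} ^ j * ν {a | ¬ p a} ^ (Fintype.card ι - j) else 0,
    Finset.card_univ]
  simp_rw [smul_ite, smul_zero]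
  rw [← sum_filter, range_eq_Ico, Ico_filter_le, max_eq_right (Nat.zero_le k)]
  simp_rw [nsmul_eq_mul, mul_assoc]

end

/-- `P(Bin(n, u) ≥ k)`, as a polynomial in `u`. -/
noncomputable def bernsteinTail (n k : ℕ) : ℝ[X] :=
  ∑ j ∈ Ico k (n + 1), bernsteinPolynomial ℝ n j

namespace bernsteinPolynomial

theorem eval_nonneg (n ν : ℕ) {u : ℝ} (hu : u ∈ Set.Icc 0 1) :
    0 ≤ (bernsteinPolynomial ℝ n ν).eval u := by
  have := sub_nonneg.2 hu.2
  have := hu.1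
  simp only [bernsteinPolynomial, eval_mul, eval_pow, eval_natCast, eval_X, eval_sub, eval_one]
  positivity

theorem add_one_mul_succ (n ν : ℕ) :
    ((ν : ℝ[X]) + 1) * bernsteinPolynomial ℝ (n + 1) (ν + 1) =
      ((n : ℝ[X]) + 1) * X * bernsteinPolynomial ℝ n ν := by
  have h := congrArg (Nat.cast : ℕ → ℝ[X]) (Nat.add_one_mul_choose_eq n ν)
  push_cast at h
  simp only [bernsteinPolynomial, Nat.add_sub_add_right]
  linear_combination (X ^ ν * (1 - X) ^ (n - ν) * X) * h.symm

end bernsteinPolynomial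

theorem derivative_bernsteinTail {n ν : ℕ} (hν : ν ≤ n + 1) :
    derivative (bernsteinTail (n + 1) (ν + 1)) = ((n : ℝ[X]) + 1) * bernsteinPolynomial ℝ n ν := by
  rw [bernsteinTail, ← sum_Ico_add' _ ν (n + 1) 1, derivative_sum]
  simp_rw [bernsteinPolynomial.derivative_succ_aux]
  have htel := sum_Ico_sub (bernsteinPolynomial ℝ n ·) hν
  rw [bernsteinPolynomial.eq_zero_of_lt ℝ n.lt_succ_self, sum_sub_distrib] at htel
  rw [← mul_sum, sum_sub_distrib]
  linear_combination (-((n : ℝ[X]) + 1)) * htel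

theorem bernsteinTail_eval_zero {n k : ℕ} (hk : 1 ≤ k) : (bernsteinTail n k).eval 0 = 0 := by
  simp [bernsteinTail, eval_finsetSum, bernsteinPolynomial.eval_at_0, Nat.one_le_iff_ne_zero.mp hk]

theorem bernsteinTail_eval_one {n k : ℕ} (hkn : k ≤ n) : (bernsteinTail n k).eval 1 = 1 := by
  simp [bernsteinTail, eval_finsetSum, bernsteinPolynomial.eval_at_1, hkn]

theorem integral_bernsteinPolynomial_eq_sub {n ν : ℕ} (hν : ν ≤ n + 1) (a b : ℝ) :
    ∫ u in a..b, ((n : ℝ) + 1) * (bernsteinPolynomial ℝ n ν).eval u =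
      (bernsteinTail (n + 1) (ν + 1)).eval b - (bernsteinTail (n + 1) (ν + 1)).eval a := by
  refine intervalIntegral.integral_eq_sub_of_hasDerivAt
    (f := fun u => (bernsteinTail (n + 1) (ν + 1)).eval u) (fun u _ => ?_)
    (((bernsteinPolynomial ℝ n ν).continuous.const_mul _).intervalIntegrable _ _)
  simpa [derivative_bernsteinTail hν] using (bernsteinTail (n + 1) (ν + 1)).hasDerivAt u

theorem integral_bernsteinPolynomial {n ν : ℕ} (hν : ν ≤ n) :
    ∫ u in (0)..1, (bernsteinPolynomial ℝ n ν).eval u = ((n : ℝ) + 1)⁻¹ := by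
  have h := integral_bernsteinPolynomial_eq_sub (by omega : ν ≤ n + 1) 0 1
  rw [intervalIntegral.integral_const_mul, bernsteinTail_eval_one (by omega),
    bernsteinTail_eval_zero le_add_self, sub_zero] at h
  exact eq_inv_of_mul_eq_one_right h

theorem lintegral_Icc_bernsteinPolynomial {n ν : ℕ} (hν : ν ≤ n + 1) {a : ℝ}
    (ha : a ∈ Set.Icc 0 1) :
    ∫⁻ u in Set.Icc 0 a, ENNReal.ofReal (((n : ℝ) + 1) * (bernsteinPolynomial ℝ n ν).eval u) =
      ENNReal.ofReal ((bernsteinTail (n + 1) (ν + 1)).eval a) := by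
  rw [← ofReal_integral_eq_lintegral_ofReal, integral_Icc_eq_integral_Ioc,
    ← intervalIntegral.integral_of_le ha.1, integral_bernsteinPolynomial_eq_sub hν,
    bernsteinTail_eval_zero le_add_self, sub_zero]
  · exact ((bernsteinPolynomial ℝ n ν).continuous.const_mul _).integrableOn_Icc
  · filter_upwards [ae_restrict_mem measurableSet_Icc] with u hu
    exact mul_nonneg (by positivity)
      (bernsteinPolynomial.eval_nonneg n ν ⟨hu.1, hu.2.trans ha.2⟩)

/-- The Beta`(ν + 1, n - ν + 1)` distribution. -/
noncomputable def bernsteinMeasure (n ν : ℕ) : Measure ℝ :=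
  (volume.restrict (Set.Icc 0 1)).withDensity fun u =>
    ENNReal.ofReal (((n : ℝ) + 1) * (bernsteinPolynomial ℝ n ν).eval u)

theorem bernsteinMeasure_Iic {n ν : ℕ} (hν : ν ≤ n + 1) {a : ℝ} (ha : a ∈ Set.Icc 0 1) :
    bernsteinMeasure n ν (Set.Iic a) = ENNReal.ofReal ((bernsteinTail (n + 1) (ν + 1)).eval a) := by
  have hIcc : Set.Iic a ∩ Set.Icc 0 1 = Set.Icc 0 a :=
    Set.ext fun u => ⟨fun h => ⟨h.2.1, h.1⟩, fun h => ⟨h.2, h.1, h.2.trans ha.2⟩⟩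
  rw [bernsteinMeasure, withDensity_apply _ measurableSet_Iic,
    Measure.restrict_restrict measurableSet_Iic, hIcc, lintegral_Icc_bernsteinPolynomial hν ha]

theorem isProbabilityMeasure_bernsteinMeasure {n ν : ℕ} (hν : ν ≤ n) :
    IsProbabilityMeasure (bernsteinMeasure n ν) := by
  constructor
  rw [bernsteinMeasure, withDensity_apply _ MeasurableSet.univ, Measure.restrict_univ,
    lintegral_Icc_bernsteinPolynomial (by omega) ⟨zero_le_one, le_rfl⟩,
    bernsteinTail_eval_one (by omega), ENNReal.ofReal_one]

theorem integral_div_bernsteinMeasure {n ν : ℕ} (hν : ν ≤ n) :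
    ∫ u, ((ν : ℝ) + 1) / u ∂bernsteinMeasure (n + 1) (ν + 1) = n + 2 := by
  have hpt : ∀ u ∈ Set.Ioc (0 : ℝ) 1,
      (ENNReal.ofReal ((((n + 1 : ℕ) : ℝ) + 1) *
        (bernsteinPolynomial ℝ (n + 1) (ν + 1)).eval u)).toReal • (((ν : ℝ) + 1) / u) =
        ((n : ℝ) + 2) * (((n : ℝ) + 1) * (bernsteinPolynomial ℝ n ν).eval u) := by
    intro u hu
    have hshift := congrArg (eval u) (bernsteinPolynomial.add_one_mul_succ n ν)
    simp only [eval_mul, eval_add, eval_natCast, eval_one, eval_X] at hshift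
    rw [ENNReal.toReal_ofReal (mul_nonneg (by positivity)
      (bernsteinPolynomial.eval_nonneg _ _ ⟨hu.1.le, hu.2⟩)), smul_eq_mul]
    have := hu.1.ne'
    field_simp
    push_cast
    linear_combination (n + 2 : ℝ) * hshift
  rw [bernsteinMeasure, integral_withDensity_eq_integral_toReal_smul (by fun_prop)
      (ae_of_all _ fun _ => ENNReal.ofReal_lt_top), integral_Icc_eq_integral_Ioc,
    setIntegral_congr_fun measurableSet_Ioc hpt, integral_const_mul, integral_const_mul,
    ← intervalIntegral.integral_of_le zero_le_one, integral_bernsteinPolynomial hν]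
  field_simp

theorem MeasureTheory.Measure.ext_of_Iic_of_mem_Icc {α : Type*} [TopologicalSpace α]
    {m : MeasurableSpace α} [SecondCountableTopology α] [LinearOrder α] [OrderTopology α]
    [BorelSpace α]
    {μ ν : Measure α} [IsProbabilityMeasure μ] [IsProbabilityMeasure ν] {a b : α}
    (ha : μ (Set.Iic a) = 0) (hb : μ (Set.Iic b) = 1)
    (h : ∀ x ∈ Set.Icc a b, μ (Set.Iic x) = ν (Set.Iic x)) : μ = ν := by
  have hab : a ≤ b := by
    by_contra! hba
    simpa [ha, hb] using measure_mono (μ := μ) (Set.Iic_subset_Iic.2 hba.le)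
  have hνa : ν (Set.Iic a) = 0 := h a ⟨le_rfl, hab⟩ ▸ ha
  have hνb : ν (Set.Iic b) = 1 := h b ⟨hab, le_rfl⟩ ▸ hb
  refine Measure.ext_of_Iic μ ν fun x => ?_
  rcases lt_or_ge x a with hxa | hax
  · rw [measure_mono_null (Set.Iic_subset_Iic.2 hxa.le) ha,
      measure_mono_null (Set.Iic_subset_Iic.2 hxa.le) hνa]
  rcases le_or_gt x b with hxb | hbx
  · exact h x ⟨hax, hxb⟩
  · have hone : ∀ ρ : Measure α, IsProbabilityMeasure ρ → ρ (Set.Iic b) = 1 → ρ (Set.Iic x) = 1 :=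
      fun ρ _ hρ => le_antisymm prob_le_one (hρ ▸ measure_mono (Set.Iic_subset_Iic.2 hbx.le))
    rw [hone μ inferInstance hb, hone ν inferInstance hνb]

theorem measurable_kthSmallest {n k : ℕ} (hk : 1 ≤ k) (hkn : k ≤ n) :
    Measurable (kthSmallest n k) := by
  refine measurable_of_Iic fun u => ?_
  have hset : kthSmallest n k ⁻¹' Set.Iic u = {x | k ≤ #{i | x i ≤ u}} :=
    Set.ext fun x => kthSmallest_le_iff hk hkn x u
  rw [hset]
  exact measurableSet_le_card_filter measurableSet_Iic k

instance : IsProbabilityMeasure (volume.restrict (Set.Icc (0 : ℝ) 1)) := ⟨by simp⟩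

theorem unifCube_kthSmallest_le {n k : ℕ} (hk : 1 ≤ k) (hkn : k ≤ n) {u : ℝ}
    (hu : u ∈ Set.Icc 0 1) :
    unifCube n {x | kthSmallest n k x ≤ u} = ENNReal.ofReal ((bernsteinTail n k).eval u) := by
  have hmeas : MeasurableSet {a : ℝ | a ≤ u} := measurableSet_Iic
  have hle : volume.restrict (Set.Icc 0 1) {a : ℝ | a ≤ u} = ENNReal.ofReal u := by
    have hIcc : {a : ℝ | a ≤ u} ∩ Set.Icc 0 1 = Set.Icc 0 u :=
      Set.ext fun a => ⟨fun h => ⟨h.2.1, h.1⟩, fun h => ⟨h.2, h.1, h.2.trans hu.2⟩⟩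
    rw [Measure.restrict_apply hmeas, hIcc, Real.volume_Icc, sub_zero]
  have hgt : volume.restrict (Set.Icc 0 1) {a : ℝ | ¬ a ≤ u} = ENNReal.ofReal (1 - u) := by
    rw [← Set.compl_ofPred, prob_compl_eq_one_sub hmeas, hle,
      ENNReal.ofReal_sub _ hu.1, ENNReal.ofReal_one]
  simp_rw [kthSmallest_le_iff hk hkn]
  rw [unifCube, measure_pi_le_card_filter _ hmeas, hle, hgt, Fintype.card_fin,
    bernsteinTail, eval_finsetSum, ENNReal.ofReal_sum_of_nonneg
      fun j _ => bernsteinPolynomial.eval_nonneg n j hu]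
  refine sum_congr rfl fun j _ => ?_
  have h0u := hu.1
  have h1u := sub_nonneg.2 hu.2
  simp only [bernsteinPolynomial, eval_mul, eval_pow, eval_natCast, eval_X, eval_sub, eval_one]
  rw [ENNReal.ofReal_mul (by positivity), ENNReal.ofReal_mul (by positivity),
    ENNReal.ofReal_pow h0u, ENNReal.ofReal_pow h1u, ENNReal.ofReal_natCast]

theorem map_kthSmallest_unifCube {n ν : ℕ} (hν : ν ≤ n) :
    (unifCube (n + 1)).map (kthSmallest (n + 1) (ν + 1)) = bernsteinMeasure n ν := by
  have hτ := measurable_kthSmallest (n := n + 1) (k := ν + 1) (by omega) (by omega)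
  have := isProbabilityMeasure_bernsteinMeasure hν
  have : IsProbabilityMeasure (unifCube (n + 1)) := by rw [unifCube]; infer_instance
  have : IsProbabilityMeasure ((unifCube (n + 1)).map (kthSmallest (n + 1) (ν + 1))) :=
    Measure.isProbabilityMeasure_map hτ.aemeasurable
  have hcdf : ∀ a ∈ Set.Icc (0 : ℝ) 1, (unifCube (n + 1)).map (kthSmallest (n + 1) (ν + 1))
      (Set.Iic a) = ENNReal.ofReal ((bernsteinTail (n + 1) (ν + 1)).eval a) := fun a ha => by
    rw [Measure.map_apply hτ measurableSet_Iic]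
    exact unifCube_kthSmallest_le (by omega) (by omega) ha
  refine Measure.ext_of_Iic_of_mem_Icc (a := 0) (b := 1) ?_ ?_ fun a ha => ?_
  · rw [hcdf 0 ⟨le_rfl, zero_le_one⟩, bernsteinTail_eval_zero (by omega), ENNReal.ofReal_zero]
  · rw [hcdf 1 ⟨zero_le_one, le_rfl⟩, bernsteinTail_eval_one (by omega), ENNReal.ofReal_one]
  · rw [hcdf a ha, bernsteinMeasure_Iic (by omega) ha]

/-- The bottom-`k` cardinality estimator `(k-1)/τ` is an unbiased estimator of `n`. -/
theorem bottom_k_estimator_unbiased (n k : ℕ) (hk : 2 ≤ k) (hkn : k ≤ n) :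
    ∫ x, ((k : ℝ) - 1) / kthSmallest n k x ∂(unifCube n) = n := by
  obtain ⟨ν, rfl⟩ : ∃ ν, k = ν + 1 + 1 := ⟨k - 2, by omega⟩
  obtain ⟨m, rfl⟩ : ∃ m, n = m + 1 + 1 := ⟨n - 2, by omega⟩
  rw [← integral_map (measurable_kthSmallest (by omega) (by omega)).aemeasurable (by fun_prop),
    map_kthSmallest_unifCube (by omega)]
  simp only [Nat.cast_add, Nat.cast_one, add_sub_cancel_right]
  rw [integral_div_bernsteinMeasure (by omega)]
  ring
end

section
/- Let α be a finite type, ι an index type, S : ι → Finset α a set family, P : Finset ι, and let U = ⋃_{p ∈ P} S_p (as a Finset). Suppose R* ⊆ P is a nonempty cover, i.e. ⋃_{p ∈ R*} S_p = U. Then for every R ⊆ P there exists p ∈ R* such that |U \ (S_R ∪ S_p)| ≤ (1 − 1/|R*|)·|U \ S_R| (as real numbers), where S_R denotes ⋃_{q ∈ R} S_q. -/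
/-- The averaging step of the greedy set-cover analysis: if `R*` is a nonempty cover,
then for every `R ⊆ P` some collection `p ∈ R*` covers at least a `1/|R*|` fraction
of the elements not yet covered by `R`. -/
theorem greedy_averaging_step {α ι : Type*} [Fintype α] [DecidableEq α]
    (S : ι → Finset α) (P : Finset ι) (U : Finset α) (hU : U = P.biUnion S)
    (Rstar : Finset ι) (hRsub : Rstar ⊆ P) (hRne : Rstar.Nonempty)
    (hRcover : Rstar.biUnion S = U) :
    ∀ R ⊆ P, ∃ p ∈ Rstar,
      (((U \ (R.biUnion S ∪ S p)).card : ℝ)) ≤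
        (1 - 1 / (Rstar.card : ℝ)) * ((U \ R.biUnion S).card : ℝ) := by
  intro R hR
  set W : Finset α := U \ R.biUnion S with hW
  have hkpos : (0 : ℝ) < (Rstar.card : ℝ) := by
    exact_mod_cast Finset.card_pos.mpr hRne
  -- W is covered by the union over Rstar
  have hWsub : W ⊆ Rstar.biUnion (fun p => W ∩ S p) := by
    intro x hx
    have hxU : x ∈ U := (Finset.mem_sdiff.mp hx).1
    have : x ∈ Rstar.biUnion S := hRcover ▸ hxU
    obtain ⟨p, hp, hxp⟩ := Finset.mem_biUnion.mp this
    exact Finset.mem_biUnion.mpr ⟨p, hp, Finset.mem_inter.mpr ⟨hx, hxp⟩⟩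
  have hsum : (W.card : ℝ) ≤ ∑ p ∈ Rstar, ((W ∩ S p).card : ℝ) := by
    have h1 : W.card ≤ (Rstar.biUnion (fun p => W ∩ S p)).card :=
      Finset.card_le_card hWsub
    have h2 : (Rstar.biUnion (fun p => W ∩ S p)).card ≤
        ∑ p ∈ Rstar, (W ∩ S p).card := Finset.card_biUnion_le
    exact_mod_cast h1.trans h2
  -- averaging: some p has |W ∩ S p| ≥ |W| / |Rstar|
  have : ∃ p ∈ Rstar, (W.card : ℝ) / (Rstar.card : ℝ) ≤ ((W ∩ S p).card : ℝ) := by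
    by_contra h
    push_neg at h
    have hlt : ∑ p ∈ Rstar, ((W ∩ S p).card : ℝ) <
        ∑ _p ∈ Rstar, (W.card : ℝ) / (Rstar.card : ℝ) :=
      Finset.sum_lt_sum_of_nonempty hRne h
    rw [Finset.sum_const, nsmul_eq_mul, mul_div_cancel₀ _ (ne_of_gt hkpos)] at hlt
    linarith
  obtain ⟨p, hp, hple⟩ := this
  refine ⟨p, hp, ?_⟩
  have heq : U \ (R.biUnion S ∪ S p) = W \ S p := by
    rw [hW]
    ext x
    simp only [Finset.mem_sdiff, Finset.mem_union]
    tauto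
  have hcard : ((W \ S p).card : ℝ) = (W.card : ℝ) - ((W ∩ S p).card : ℝ) := by
    have := Finset.card_inter_add_card_sdiff W (S p)
    have : (W ∩ S p).card + (W \ S p).card = W.card := this
    push_cast [← this]
    ring
  rw [heq, hcard]
  have hWnn : (0 : ℝ) ≤ (W.card : ℝ) := by positivity
  have : (1 - 1 / (Rstar.card : ℝ)) * (W.card : ℝ)
      = (W.card : ℝ) - (W.card : ℝ) / (Rstar.card : ℝ) := by ring
  rw [this]
  linarith
end

section
/- Let α be a finite type, ι an index type, S : ι → Finset α, P : Finset ι, U = ⋃_{p ∈ P} S_p with |U| = n ≥ 1, and let R* ⊆ P be a nonempty cover (⋃_{p ∈ R*} S_p = U) of size r = |R*|. Let (R_i)_{i ≥ 0} be any greedy selection sequence: R_0 = ∅ and R_{i+1} = R_i ∪ {p_i} where p_i ∈ P satisfies |S_{R_i ∪ {p_i}}| ≥ |S_{R_i ∪ {q}}| for all q ∈ P. Then for every natural number i with i > r·ln n, the greedy selection covers everything: S_{R_i} = U. -/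
/-- After more than `r ln n` greedy steps, greedy set-cover selection covers the whole
universe, where `r` is the size of a cover and `n = |U| ≥ 1`. -/
theorem greedy_covers_after_log_steps {α ι : Type*} [Fintype α] [DecidableEq α]
    [DecidableEq ι]
    (S : ι → Finset α) (P : Finset ι) (U : Finset α) (hU : U = P.biUnion S)
    (n : ℕ) (hn : U.card = n) (hn1 : 1 ≤ n)
    (Rstar : Finset ι) (hRsub : Rstar ⊆ P) (hRne : Rstar.Nonempty)
    (hRcover : Rstar.biUnion S = U) (r : ℕ) (hr : r = Rstar.card)
    (R : ℕ → Finset ι) (p : ℕ → ι) (hR0 : R 0 = ∅) (hpP : ∀ i, p i ∈ P)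
    (hRsucc : ∀ i, R (i + 1) = insert (p i) (R i))
    (hgreedy : ∀ i, ∀ q ∈ P,
      ((insert q (R i)).biUnion S).card ≤ ((insert (p i) (R i)).biUnion S).card) :
    ∀ i : ℕ, (r : ℝ) * Real.log n < (i : ℝ) → (R i).biUnion S = U := by
  have hr1 : 1 ≤ r := by
    rw [hr]; exact Finset.card_pos.mpr hRne
  have hrR : (1 : ℝ) ≤ (r : ℝ) := by exact_mod_cast hr1
  have hrpos : (0 : ℝ) < (r : ℝ) := by linarith
  -- R i ⊆ P
  have hRiP : ∀ i, R i ⊆ P := by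
    intro i
    induction i with
    | zero => rw [hR0]; exact Finset.empty_subset _
    | succ k ih =>
        rw [hRsucc k]
        exact Finset.insert_subset (hpP k) ih
  have hCsub : ∀ i, (R i).biUnion S ⊆ U := by
    intro i
    rw [hU]
    exact Finset.biUnion_subset_biUnion_of_subset_left S (hRiP i)
  set u : ℕ → ℕ := fun i => (U \ (R i).biUnion S).card with hu
  have hu_card : ∀ i, u i = n - ((R i).biUnion S).card := by
    intro i
    simp only [hu]
    rw [Finset.card_sdiff_of_subset (hCsub i), hn]
  -- one-step contraction
  have hstep : ∀ i, (u (i + 1) : ℝ) ≤ (1 - 1 / r) * u i := by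
    intro i
    set C := (R i).biUnion S with hC
    set W := U \ C with hW
    -- W is covered by Rstar
    have hWsub : W ⊆ Rstar.biUnion S := by
      rw [hRcover]; exact Finset.sdiff_subset
    -- choose q0 maximizing |S q ∩ W|
    obtain ⟨q0, hq0, hq0max⟩ := Finset.exists_max_image Rstar (fun q => (S q ∩ W).card) hRne
    set m := (S q0 ∩ W).card with hm
    -- W.card ≤ r * m
    have hWle : W.card ≤ r * m := by
      have h1 : W = Rstar.biUnion (fun q => S q ∩ W) := by
        ext x
        simp only [Finset.mem_biUnion, Finset.mem_inter]
        constructor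
        · intro hx
          obtain ⟨q, hq, hxq⟩ := Finset.mem_biUnion.mp (hWsub hx)
          exact ⟨q, hq, hxq, hx⟩
        · rintro ⟨q, hq, hxq, hx⟩; exact hx
      calc W.card ≤ ∑ q ∈ Rstar, (S q ∩ W).card := by
              conv_lhs => rw [h1]
              exact Finset.card_biUnion_le
        _ ≤ ∑ _q ∈ Rstar, m := Finset.sum_le_sum (fun q hq => hq0max q hq)
        _ = r * m := by rw [Finset.sum_const, smul_eq_mul, hr]
    -- greedy progress
    have hprog : C.card + m ≤ ((R (i + 1)).biUnion S).card := by
      have hdisj : Disjoint C (S q0 ∩ W) := by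
        apply Finset.disjoint_left.mpr
        intro x hxC hx
        exact (Finset.mem_sdiff.mp (Finset.mem_inter.mp hx).2).2 hxC
      have h1 : C.card + m = (C ∪ (S q0 ∩ W)).card :=
        (Finset.card_union_of_disjoint hdisj).symm
      have h2 : C ∪ (S q0 ∩ W) ⊆ (insert q0 (R i)).biUnion S := by
        rw [Finset.biUnion_insert]
        apply Finset.union_subset
        · exact Finset.subset_union_right
        · exact (Finset.inter_subset_left).trans Finset.subset_union_left
      calc C.card + m ≤ ((insert q0 (R i)).biUnion S).card := by
              rw [h1]; exact Finset.card_le_card h2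
        _ ≤ ((insert (p i) (R i)).biUnion S).card := hgreedy i q0 (hRsub hq0)
        _ = ((R (i + 1)).biUnion S).card := by rw [hRsucc i]
    -- nat inequality: u (i+1) + m ≤ u i
    have hCle : ((R (i + 1)).biUnion S).card ≤ n := by
      rw [← hn]; exact Finset.card_le_card (hCsub (i + 1))
    have hCile : C.card ≤ n := by
      rw [← hn]; exact Finset.card_le_card (hCsub i)
    have hWu : W.card = u i := rfl
    have e1 := hu_card (i + 1)
    have e2 := hu_card i
    have hCeq : ((R i).biUnion S).card = C.card := rfl
    have hnat : u (i + 1) + m ≤ u i := by omega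
    -- move to reals
    have h1 : (u i : ℝ) ≤ r * m := by
      have : u i ≤ r * m := hWu ▸ hWle
      exact_mod_cast this
    have h2 : (u (i + 1) : ℝ) + m ≤ u i := by exact_mod_cast hnat
    have h3 : (u i : ℝ) / r ≤ m := by
      rw [div_le_iff₀ hrpos]
      linarith [h1]
    have : (u (i + 1) : ℝ) ≤ (u i : ℝ) - (u i : ℝ) / r := by linarith
    calc (u (i + 1) : ℝ) ≤ (u i : ℝ) - (u i : ℝ) / r := this
      _ = (1 - 1 / r) * u i := by ring
  have hfac0 : (0 : ℝ) ≤ 1 - 1 / r := by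
    have : 1 / (r : ℝ) ≤ 1 := by
      rw [div_le_one hrpos]; exact hrR
    linarith
  -- geometric decay
  have hdecay : ∀ i, (u i : ℝ) ≤ n * (1 - 1 / r) ^ i := by
    intro i
    induction i with
    | zero =>
        simp only [pow_zero, mul_one]
        have : u 0 = n := by
          simp only [hu, hR0, Finset.biUnion_empty, Finset.sdiff_empty, hn]
        rw [this]
    | succ k ih =>
        calc (u (k + 1) : ℝ) ≤ (1 - 1 / r) * u k := hstep k
          _ ≤ (1 - 1 / r) * (n * (1 - 1 / r) ^ k) := by
              exact mul_le_mul_of_nonneg_left ih hfac0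
          _ = n * (1 - 1 / r) ^ (k + 1) := by ring
  -- conclude
  intro i hi
  have hnpos : (0 : ℝ) < n := by exact_mod_cast hn1
  have hexp : (1 - 1 / (r : ℝ)) ≤ Real.exp (-(1 / r)) := by
    have := Real.add_one_le_exp (-(1 / (r : ℝ)))
    linarith
  have hpow : (1 - 1 / (r : ℝ)) ^ i ≤ Real.exp (-(1 / r)) ^ i :=
    pow_le_pow_left₀ hfac0 hexp i
  have hexppow : Real.exp (-(1 / (r : ℝ))) ^ i = Real.exp (-(i / r)) := by
    rw [← Real.exp_nat_mul]
    congr 1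
    ring
  have hlog : Real.log n < (i : ℝ) / r := by
    rw [lt_div_iff₀ hrpos]
    linarith [hi]
  have hlt : (n : ℝ) * Real.exp (-(i / (r : ℝ))) < 1 := by
    have h1 : (n : ℝ) < Real.exp ((i : ℝ) / r) := by
      calc (n : ℝ) = Real.exp (Real.log n) := (Real.exp_log hnpos).symm
        _ < Real.exp ((i : ℝ) / r) := Real.exp_lt_exp.mpr hlog
    have h2 : (0 : ℝ) < Real.exp (-(i / (r : ℝ))) := Real.exp_pos _
    calc (n : ℝ) * Real.exp (-(i / (r : ℝ)))
        < Real.exp ((i : ℝ) / r) * Real.exp (-(i / (r : ℝ))) := by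
          exact mul_lt_mul_of_pos_right h1 h2
      _ = 1 := by rw [← Real.exp_add]; ring_nf; exact Real.exp_zero
  have hui : (u i : ℝ) < 1 := by
    calc (u i : ℝ) ≤ n * (1 - 1 / r) ^ i := hdecay i
      _ ≤ n * Real.exp (-(i / (r : ℝ))) := by
          rw [← hexppow]
          exact mul_le_mul_of_nonneg_left hpow (le_of_lt hnpos)
      _ < 1 := hlt
  have hui0 : u i = 0 := by
    have : u i < 1 := by exact_mod_cast hui
    omega
  have hsdiff : U \ (R i).biUnion S = ∅ := Finset.card_eq_zero.mp hui0
  have hUsub : U ⊆ (R i).biUnion S := Finset.sdiff_eq_empty_iff_subset.mp hsdiff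
  exact Finset.Subset.antisymm (hCsub i) hUsub
end
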